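/- Let A be a symmetric n×n real matrix satisfying λ|ξ|² ≤ (Aξ·ξ) ≤ L|ξ|² for all ξ ∈ ℝⁿ, where 0 < λ ≤ L. Let ν ∈ ℝⁿ be a unit vector. Then for every vector ξ ∈ ℝⁿ, (Aξ·ξ) ≥ (1/L)(Aξ·ν)² + λ|ξ_S|², where ξ_S := ξ − (ξ·ν)ν is the component of ξ orthogonal to ν. -/

import Mathlib

/-!
Write `t = ⟪ξ, ν⟫`. For every `c`, coercivity applied to `ξ - c • ν` gives
`λ ‖ξ - c • ν‖² ≤ (Aξ·ξ) - 2c (Aξ·ν) + c² (Aν·ν) ≤ (Aξ·ξ) - 2c (Aξ·ν) + c² L`,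
and `‖ξ - c • ν‖² ≥ ‖ξ - t • ν‖² = ‖ξ_S‖²` since `t • ν` is the orthogonal projection of `ξ` on `ℝ ν`.
The choice `c = (Aξ·ν) / L` minimises the right-hand side, which becomes `(Aξ·ξ) - (Aξ·ν)² / L`.
-/

open LinearMap (BilinForm)

section InnerProductSpace

variable {E : Type*} [NormedAddCommGroup E] [InnerProductSpace ℝ E]

theorem norm_sub_inner_smul_sq_le {ν : E} (hν : ‖ν‖ = 1) (ξ : E) (c : ℝ) :
    ‖ξ - inner ℝ ξ ν • ν‖ ^ 2 ≤ ‖ξ - c • ν‖ ^ 2 := by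
  have key : ‖ξ - c • ν‖ ^ 2 = ‖ξ - inner ℝ ξ ν • ν‖ ^ 2 + (inner ℝ ξ ν - c) ^ 2 := by
    simp only [norm_sub_sq_real, real_inner_smul_right, norm_smul, hν, Real.norm_eq_abs,
      mul_pow, sq_abs]
    ring
  rw [key]
  exact le_add_of_nonneg_right (sq_nonneg _)

theorem LinearMap.BilinForm.IsSymm.apply_sub_smul_self {B : BilinForm ℝ E} (hB : B.IsSymm)
    (ξ ν : E) (c : ℝ) :
    B (ξ - c • ν) (ξ - c • ν) = B ξ ξ - 2 * c * B ξ ν + c ^ 2 * B ν ν := by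
  simp only [map_sub, map_smul, LinearMap.sub_apply, LinearMap.smul_apply, smul_eq_mul,
    hB.eq ν ξ]
  ring

theorem LinearMap.BilinForm.IsSymm.sq_div_add_mul_norm_sub_inner_smul_sq_le
    {B : BilinForm ℝ E} (hB : B.IsSymm) {lam L : ℝ} (hlam : 0 ≤ lam) (hL : 0 < L)
    (hcoercive : ∀ x, lam * ‖x‖ ^ 2 ≤ B x x) {ν : E} (hν : ‖ν‖ = 1) (hBν : B ν ν ≤ L)
    (ξ : E) :
    (B ξ ν) ^ 2 / L + lam * ‖ξ - inner ℝ ξ ν • ν‖ ^ 2 ≤ B ξ ξ := by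
  set c := B ξ ν / L
  have hcL : c * L = B ξ ν := div_mul_cancel₀ _ hL.ne'
  calc B ξ ν ^ 2 / L + lam * ‖ξ - inner ℝ ξ ν • ν‖ ^ 2
      ≤ B ξ ν ^ 2 / L + lam * ‖ξ - c • ν‖ ^ 2 := by
        have := norm_sub_inner_smul_sq_le hν ξ c; gcongr
    _ ≤ B ξ ν ^ 2 / L + (B ξ ξ - 2 * c * B ξ ν + c ^ 2 * B ν ν) := by
        rw [← hB.apply_sub_smul_self]; gcongr; exact hcoercive _
    _ ≤ B ξ ν ^ 2 / L + (B ξ ξ - 2 * c * B ξ ν + c ^ 2 * L) := by gcongr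
    _ = B ξ ξ := by rw [← hcL]; field_simp; ring

end InnerProductSpace

namespace Matrix

variable {ι : Type*} [Fintype ι] [DecidableEq ι]

noncomputable def toEuclideanBilin (A : Matrix ι ι ℝ) : BilinForm ℝ (EuclideanSpace ℝ ι) :=
  A.toBilin'.compl₁₂ (WithLp.linearEquiv 2 ℝ (ι → ℝ)).toLinearMap
    (WithLp.linearEquiv 2 ℝ (ι → ℝ)).toLinearMap

theorem toEuclideanBilin_apply (A : Matrix ι ι ℝ) (x y : EuclideanSpace ℝ ι) :
    A.toEuclideanBilin x y = ∑ i, ∑ j, A i j * x i * y j := by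
  rw [toEuclideanBilin, LinearMap.compl₁₂_apply, toBilin'_apply]
  congr! 2 with i - j -
  change x i * A i j * y j = _
  ring

theorem IsSymm.toEuclideanBilin {A : Matrix ι ι ℝ} (hA : A.IsSymm) :
    A.toEuclideanBilin.IsSymm :=
  ⟨fun _ _ => (isSymm_toBilin'_iff_isSymm.mpr hA).eq _ _⟩

end Matrix

/-- **Radial/spherical decomposition of an elliptic quadratic form**
(Lemma 2.5): if `A` is a symmetric matrix with `λ|ξ|² ≤ (Aξ·ξ) ≤ L|ξ|²` and
`ν` is a unit vector, then for every `ξ`,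
`(Aξ·ξ) ≥ (1/L)(Aξ·ν)² + λ|ξ_S|²`, where `ξ_S = ξ - (ξ·ν)ν`. -/
theorem quadratic_form_radial_spherical_split
    (n : ℕ) (lam L : ℝ) (hlam : 0 < lam) (hlL : lam ≤ L)
    (A : Matrix (Fin n) (Fin n) ℝ) (hsym : A.IsSymm)
    (hell : ∀ ξ : EuclideanSpace ℝ (Fin n),
      lam * ‖ξ‖ ^ 2 ≤ ∑ i, ∑ j, A i j * ξ i * ξ j ∧
      ∑ i, ∑ j, A i j * ξ i * ξ j ≤ L * ‖ξ‖ ^ 2)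
    (ν : EuclideanSpace ℝ (Fin n)) (hν : ‖ν‖ = 1)
    (ξ : EuclideanSpace ℝ (Fin n)) :
    (1 / L) * (∑ i, ∑ j, A i j * ξ i * ν j) ^ 2 +
        lam * ‖ξ - (inner ℝ ξ ν : ℝ) • ν‖ ^ 2 ≤
      ∑ i, ∑ j, A i j * ξ i * ξ j := by
  simp only [← A.toEuclideanBilin_apply] at hell ⊢
  have hBν : A.toEuclideanBilin ν ν ≤ L := by simpa [hν] using (hell ν).2
  rw [one_div_mul_eq_div]
  exact hsym.toEuclideanBilin.sq_div_add_mul_norm_sub_inner_smul_sq_le hlam.le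
    (hlam.trans_le hlL) (fun x => (hell x).1) hν hBν ξ
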